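/- arXiv:2503.02990 — 6 statements merged into one kernel-verified Lean document; each statement's English description precedes it below -/
import Mathlib

section
/- The generating function of the flag major index on the colored permutation group satisfies: Σ_{(ω,τ)∈𝔖_{n,r}} q^{fmaj_{n,r}(ω,τ)} = [r]_q [2r]_q ⋯ [nr]_q, where [m]_q = 1 + q + ⋯ + q^{m-1}. -/
open scoped Classical BigOperators

namespace ColoredPerm

/-- A colored permutation: a pair of a permutation of `Fin n` and a coloring. -/
abbrev CP (n r : ℕ) := Equiv.Perm (Fin n) × (Fin n → ZMod r)

/-- Index `i : Fin n` represents position `i+1 ∈ [n]`.  Descent at position `i+1`. -/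
def IsDescent {n r : ℕ} (σ : CP n r) (i : Fin n) : Prop :=
  if h : (i : ℕ) + 1 < n then
    (σ.2 ⟨(i : ℕ) + 1, h⟩).val < (σ.2 i).val ∨
      (σ.2 i = σ.2 ⟨(i : ℕ) + 1, h⟩ ∧ σ.1 ⟨(i : ℕ) + 1, h⟩ < σ.1 i)
  else (σ.2 i).val ≠ 0

/-- Descent indicator. -/
noncomputable def X {n r : ℕ} (i : Fin n) (σ : CP n r) : ℚ :=
  if IsDescent σ i then 1 else 0

/-- Color indicator `Y_{i,c}`. -/
noncomputable def Y {n r : ℕ} (i : Fin n) (c : ZMod r) (σ : CP n r) : ℚ :=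
  if σ.2 i = c then 1 else 0

noncomputable def des {n r : ℕ} (σ : CP n r) : ℕ :=
  (Finset.univ.filter (fun i => IsDescent σ i)).card

/-- Major index: sum of descent positions lying in `[n-1]`. -/
noncomputable def maj {n r : ℕ} (σ : CP n r) : ℕ :=
  ∑ i ∈ Finset.univ.filter (fun i : Fin n => IsDescent σ i ∧ (i : ℕ) + 1 < n),
    ((i : ℕ) + 1)

def col {n r : ℕ} (σ : CP n r) : ℕ := ∑ i, (σ.2 i).val

noncomputable def fmaj {n r : ℕ} (σ : CP n r) : ℕ := r * maj σ + col σ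

/-- Ordinary descent of a permutation of `Fin n` at position `i+1` (no descent at last position). -/
def IsDescentS {n : ℕ} (w : Equiv.Perm (Fin n)) (i : Fin n) : Prop :=
  if h : (i : ℕ) + 1 < n then w ⟨(i : ℕ) + 1, h⟩ < w i else False

noncomputable def XS {n : ℕ} (i : Fin n) (w : Equiv.Perm (Fin n)) : ℚ :=
  if IsDescentS w i then 1 else 0

noncomputable def majS {n : ℕ} (w : Equiv.Perm (Fin n)) : ℕ :=
  ∑ i ∈ Finset.univ.filter (fun i : Fin n => IsDescentS w i ∧ (i : ℕ) + 1 < n),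
    ((i : ℕ) + 1)

/-- Expectation of `f` under the uniform distribution on a finite set `S`. -/
noncomputable def E {α : Type*} (S : Finset α) (f : α → ℚ) : ℚ :=
  (∑ x ∈ S, f x) / S.card

/-- Group multiplication of the wreath product `ℤ_r ≀ 𝔖_n`. -/
def cmul {n r : ℕ} (x y : CP n r) : CP n r :=
  (x.1 * y.1, fun i => x.2 (y.1 i) + y.2 i)

/-- Inverse in the wreath product. -/
def cinv {n r : ℕ} (x : CP n r) : CP n r :=
  (x.1⁻¹, fun i => - x.2 (x.1⁻¹ i))

/-- Conjugacy in the colored permutation group. -/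
def IsConjCP {n r : ℕ} (x y : CP n r) : Prop :=
  ∃ g : CP n r, cmul (cmul g x) (cinv g) = y

/-- The elements in the same cycle of `σ` as `i`. -/
noncomputable def cycleSet {n r : ℕ} (σ : CP n r) (i : Fin n) : Finset (Fin n) :=
  Finset.univ.filter (fun x => σ.1.SameCycle i x)

/-- The number of cycles of `σ` of length `ℓ` whose colors sum to `j`. -/
noncomputable def cycleCount {n r : ℕ} (σ : CP n r) (ℓ : ℕ) (j : ZMod r) : ℕ :=
  (Finset.univ.filter (fun i : Fin n =>
      (cycleSet σ i).card = ℓ ∧ (∑ x ∈ cycleSet σ i, σ.2 x) = j)).card / ℓ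

/-- `σ` has no cycle of length `ℓ`. -/
def NoCycleOfLength {n r : ℕ} (σ : CP n r) (ℓ : ℕ) : Prop :=
  ∀ i : Fin n, (cycleSet σ i).card ≠ ℓ

/-- `C` is a conjugacy class of `𝔖_{n,r}`. -/
def IsConjClass {n r : ℕ} [NeZero r] (C : Finset (CP n r)) : Prop :=
  ∃ σ₀ : CP n r, C = Finset.univ.filter (fun σ => IsConjCP σ₀ σ)

/-- `C` has no cycles of lengths `1, 2, …, m`. -/
def NoShortCycles {n r : ℕ} (C : Finset (CP n r)) (m : ℕ) : Prop :=
  ∀ σ ∈ C, ∀ ℓ, 1 ≤ ℓ → ℓ ≤ m → NoCycleOfLength σ ℓ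

/-- The relation identifying `a_i` with `a_i + 1` (on indices: `a i` with the index of
value `(a i) + 1`, when it exists). -/
def adjRel {n k : ℕ} (a : Fin k → Fin n) (p q : Fin n) : Prop :=
  (∃ i, a i = p) ∧ (q : ℕ) = (p : ℕ) + 1

/-- Being in the same block induced by `a`. -/
def SameBlock {n k : ℕ} (a : Fin k → Fin n) (p q : Fin n) : Prop :=
  Relation.EqvGen (adjRel a) p q

/-- The block containing `p`. -/
noncomputable def blockOf {n k : ℕ} (a : Fin k → Fin n) (p : Fin n) : Finset (Fin n) :=
  Finset.univ.filter (fun q => SameBlock a p q)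

/-- The set of blocks induced by `a`. -/
noncomputable def blocks {n k : ℕ} (a : Fin k → Fin n) : Finset (Finset (Fin n)) :=
  Finset.univ.image (blockOf a)

/-- `∏_i 1/|𝓑_i|!` over the blocks induced by `a`. -/
noncomputable def blockProd {n k : ℕ} (a : Fin k → Fin n) : ℚ :=
  ∏ b ∈ blocks a, (1 : ℚ) / (Nat.factorial b.card)

end ColoredPerm

namespace ColoredPerm

noncomputable def ER {α : Type*} (S : Finset α) (f : α → ℝ) : ℝ :=
  (∑ x ∈ S, f x) / S.card

noncomputable def XR {n r : ℕ} (i : Fin n) (σ : CP n r) : ℝ :=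
  if IsDescent σ i then 1 else 0

noncomputable def XSR {n : ℕ} (i : Fin n) (w : Equiv.Perm (Fin n)) : ℝ :=
  if IsDescentS w i then 1 else 0

end ColoredPerm

/-!
Write `σ = (ω, γ ∘ ω)`, so that `γ` colors the values rather than the positions. Ordering the
values by color first and size second turns the flag descents of `σ` into the ordinary descents
of the permutation `colorRank γ * ω`, so `fmaj σ = r * majS (colorRank γ * ω) + ∑ v, (γ v).val`.
For fixed `γ`, `ω ↦ colorRank γ * ω` runs over all of `𝔖_n`, hence the generating function is
`[r]_q ^ n` times MacMahon's `∏ i, [i]_{q^r}`, and `[r]_q [i]_{q^r} = [i r]_q`.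

MacMahon's theorem is proved by Carlitz insertion: inserting the largest value into the `n + 1`
gaps of `w ∈ 𝔖_n` raises `majS` by each of `0, 1, …, n` exactly once.
-/

theorem Tuple.sort_inv_lt_sort_inv_iff {n : ℕ} {α : Type*} [LinearOrder α] {f : Fin n → α}
    (hf : Function.Injective f) (u v : Fin n) :
    (Tuple.sort f)⁻¹ u < (Tuple.sort f)⁻¹ v ↔ f u < f v := by
  have hmono : StrictMono (f ∘ Tuple.sort f) :=
    (Tuple.monotone_sort f).strictMono_of_injective (hf.comp (Equiv.injective _))
  simpa using (hmono.lt_iff_lt (a := (Tuple.sort f)⁻¹ u) (b := (Tuple.sort f)⁻¹ v)).symm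

theorem ZMod.sum_pow_val {R : Type*} [CommSemiring R] (r : ℕ) [NeZero r] (q : R) :
    ∑ c : ZMod r, q ^ c.val = ∑ b ∈ Finset.range r, q ^ b := by
  obtain ⟨k, rfl⟩ := Nat.exists_eq_succ_of_ne_zero (NeZero.ne r)
  exact Fin.sum_univ_eq_sum_range (q ^ ·) (k + 1)

theorem Finset.sum_range_mul_pow {R : Type*} [CommSemiring R] (q : R) (m r : ℕ) :
    ∑ j ∈ range (m * r), q ^ j = (∑ a ∈ range m, (q ^ r) ^ a) * ∑ b ∈ range r, q ^ b := by
  induction m with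
  | zero => simp
  | succ m ih =>
    rw [Nat.succ_mul, sum_range_add, ih, sum_range_succ, add_mul]
    congr 1
    rw [mul_sum]
    simp_rw [pow_add, ← pow_mul, mul_comm r]

namespace ColoredPerm

open Finset

section Mahonian

variable {n : ℕ}

def HasDescentAt (w : Equiv.Perm (Fin n)) (m : ℕ) : Prop :=
  ∃ h : m + 1 < n, w ⟨m + 1, h⟩ < w ⟨m, by omega⟩

theorem HasDescentAt.lt {w : Equiv.Perm (Fin n)} {m : ℕ} (h : HasDescentAt w m) : m + 1 < n :=
  h.1

theorem hasDescentAt_iff (w : Equiv.Perm (Fin n)) {m : ℕ} (h : m + 1 < n) :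
    HasDescentAt w m ↔ w ⟨m + 1, h⟩ < w ⟨m, by omega⟩ :=
  ⟨fun ⟨_, h'⟩ => h', fun h' => ⟨h, h'⟩⟩

noncomputable def descentWeight (w : Equiv.Perm (Fin n)) (m : ℕ) : ℕ :=
  if HasDescentAt w m then m + 1 else 0

theorem majS_eq_sum_range (w : Equiv.Perm (Fin n)) :
    majS w = ∑ m ∈ range n, descentWeight w m := by
  rw [majS, sum_filter, ← Fin.sum_univ_eq_sum_range (descentWeight w)]
  refine sum_congr rfl fun i _ => if_congr ?_ rfl rfl
  unfold IsDescentS HasDescentAt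
  by_cases h : (i : ℕ) + 1 < n <;> simp [h]

theorem sum_range_descentWeight (w : Equiv.Perm (Fin n)) (P : ℕ) :
    ∑ m ∈ range P, descentWeight w m =
      ∑ m ∈ range (P - 1), descentWeight w m + if 0 < P ∧ HasDescentAt w (P - 1) then P else 0 := by
  rcases Nat.eq_zero_or_eq_succ_pred P with hP | hP
  · simp [hP]
  rw [hP, sum_range_succ]
  simp [descentWeight]

/-- Insert the value `n` at position `p`, shifting the later entries of `w` one place right. -/
def insertMax (p : Fin (n + 1)) (w : Equiv.Perm (Fin n)) : Equiv.Perm (Fin (n + 1)) :=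
  ((finSuccEquiv' p).trans (Equiv.optionCongr w)).trans (finSuccEquiv' (Fin.last n)).symm

theorem insertMax_apply_self (p : Fin (n + 1)) (w : Equiv.Perm (Fin n)) :
    insertMax p w p = Fin.last n := by
  simp [insertMax]

theorem insertMax_apply_succAbove (p : Fin (n + 1)) (w : Equiv.Perm (Fin n)) (j : Fin n) :
    insertMax p w (p.succAbove j) = (w j).castSucc := by
  simp [insertMax, ← Fin.succAbove_last]

theorem insertMax_bijective :
    Function.Bijective (fun pw : Fin (n + 1) × Equiv.Perm (Fin n) => insertMax pw.1 pw.2) := by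
  rw [Fintype.bijective_iff_injective_and_card]
  refine ⟨?_, by simp [Fintype.card_perm, Nat.factorial_succ]⟩
  rintro ⟨p, w⟩ ⟨p', w'⟩ h
  dsimp only at h
  obtain rfl : p = p' := (insertMax p' w').injective <| by
    rw [insertMax_apply_self, ← h, insertMax_apply_self]
  obtain rfl : w = w' := Equiv.ext fun j => Fin.castSucc_injective n <| by
    rw [← insertMax_apply_succAbove, ← insertMax_apply_succAbove, h]
  rfl

theorem insertMax_apply_of_lt (p : Fin (n + 1)) (w : Equiv.Perm (Fin n)) {m : ℕ}
    (hm : m < p) (hn : m < n) :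
    insertMax p w ⟨m, by omega⟩ = (w ⟨m, hn⟩).castSucc := by
  rw [← insertMax_apply_succAbove, Fin.succAbove_of_castSucc_lt _ _ (by simpa [Fin.lt_def])]
  rfl

theorem insertMax_apply_of_gt (p : Fin (n + 1)) (w : Equiv.Perm (Fin n)) {m : ℕ}
    (hm : p ≤ m) (hn : m < n) :
    insertMax p w ⟨m + 1, by omega⟩ = (w ⟨m, hn⟩).castSucc := by
  rw [← insertMax_apply_succAbove, Fin.succAbove_of_le_castSucc _ _ (by simpa [Fin.le_def])]
  rfl

theorem hasDescentAt_insertMax_of_lt (p : Fin (n + 1)) (w : Equiv.Perm (Fin n)) {m : ℕ}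
    (hm : m + 1 < p) : HasDescentAt (insertMax p w) m ↔ HasDescentAt w m := by
  have hn : m + 1 < n := by omega
  rw [hasDescentAt_iff _ (by omega), hasDescentAt_iff _ hn, insertMax_apply_of_lt p w hm hn,
    insertMax_apply_of_lt p w (by omega) (by omega), Fin.castSucc_lt_castSucc_iff]

theorem not_hasDescentAt_insertMax_pred (p : Fin (n + 1)) (w : Equiv.Perm (Fin n)) {m : ℕ}
    (hm : m + 1 = p) : ¬ HasDescentAt (insertMax p w) m := by
  rintro ⟨h, hlt⟩
  obtain rfl : (⟨m + 1, h⟩ : Fin (n + 1)) = p := Fin.ext hm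
  rw [insertMax_apply_self] at hlt
  exact absurd hlt (not_lt.mpr (Fin.le_last _))

theorem hasDescentAt_insertMax_self (p : Fin (n + 1)) (w : Equiv.Perm (Fin n)) :
    HasDescentAt (insertMax p w) p ↔ (p : ℕ) < n := by
  refine ⟨fun h => by have := h.lt; omega, fun hp => ?_⟩
  rw [hasDescentAt_iff _ (by omega), insertMax_apply_of_gt p w le_rfl hp, Fin.eta,
    insertMax_apply_self]
  exact Fin.castSucc_lt_last _

theorem hasDescentAt_insertMax_succ (p : Fin (n + 1)) (w : Equiv.Perm (Fin n)) {m : ℕ}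
    (hm : p ≤ m) : HasDescentAt (insertMax p w) (m + 1) ↔ HasDescentAt w m := by
  by_cases hn : m + 1 < n
  · rw [hasDescentAt_iff _ (by omega), hasDescentAt_iff _ hn,
      insertMax_apply_of_gt p w (by omega) hn, insertMax_apply_of_gt p w hm (by omega),
      Fin.castSucc_lt_castSucc_iff]
  · exact iff_of_false (fun h => by have := h.lt; omega) (fun h => hn h.lt)

theorem sum_range_descentWeight_insertMax (p : Fin (n + 1)) (w : Equiv.Perm (Fin n)) :
    ∑ m ∈ range p, descentWeight (insertMax p w) m = ∑ m ∈ range (p - 1), descentWeight w m := by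
  rcases Nat.eq_zero_or_eq_succ_pred (p : ℕ) with hp | hp
  · simp [hp]
  rw [hp, sum_range_succ, descentWeight, if_neg (not_hasDescentAt_insertMax_pred p w hp.symm),
    add_zero, Nat.pred_eq_sub_one]
  refine sum_congr rfl fun m hm => if_congr (hasDescentAt_insertMax_of_lt p w ?_) rfl rfl
  rw [mem_range] at hm
  omega

theorem descentWeight_insertMax_self (p : Fin (n + 1)) (w : Equiv.Perm (Fin n)) :
    descentWeight (insertMax p w) p = if (p : ℕ) < n then (p : ℕ) + 1 else 0 :=
  if_congr (hasDescentAt_insertMax_self p w) rfl rfl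

theorem descentWeight_insertMax_succ (p : Fin (n + 1)) (w : Equiv.Perm (Fin n)) {m : ℕ}
    (hm : p ≤ m) :
    descentWeight (insertMax p w) (m + 1) =
      descentWeight w m + if HasDescentAt w m then 1 else 0 := by
  rw [descentWeight, descentWeight, if_congr (hasDescentAt_insertMax_succ p w hm) rfl rfl]
  split_ifs <;> rfl

noncomputable def descentsFrom (w : Equiv.Perm (Fin n)) (P : ℕ) : ℕ :=
  #{m ∈ Ico P n | HasDescentAt w m}

theorem descentsFrom_of_le (w : Equiv.Perm (Fin n)) {P : ℕ} (h : n ≤ P) :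
    descentsFrom w P = 0 := by
  simp [descentsFrom, Ico_eq_empty_of_le h]

theorem descentsFrom_eq_succ_add (w : Equiv.Perm (Fin n)) (P : ℕ) :
    descentsFrom w P = descentsFrom w (P + 1) + if HasDescentAt w P then 1 else 0 := by
  rcases lt_or_ge P n with hP | hP
  · rw [descentsFrom, ← insert_Ico_add_one_left_eq_Ico hP, filter_insert]
    split_ifs <;> simp [descentsFrom]
  · rw [descentsFrom_of_le w hP, descentsFrom_of_le w (by omega),
      if_neg fun h => by have := h.lt; omega]

theorem descentsFrom_antitone (w : Equiv.Perm (Fin n)) : Antitone (descentsFrom w) :=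
  fun _ _ h => card_le_card (filter_subset_filter _ (Ico_subset_Ico_left h))

theorem descentsFrom_le_add (w : Equiv.Perm (Fin n)) (P Q : ℕ) :
    descentsFrom w P ≤ descentsFrom w Q + (Q - P) := by
  have hsub : {m ∈ Ico P n | HasDescentAt w m} ⊆ {m ∈ Ico Q n | HasDescentAt w m} ∪ Ico P Q := by
    intro m
    simp only [mem_union, mem_filter, mem_Ico]
    rintro ⟨⟨hPm, hmn⟩, hm⟩
    by_cases hQm : Q ≤ m
    exacts [Or.inl ⟨⟨hQm, hmn⟩, hm⟩, Or.inr ⟨hPm, by omega⟩]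
  simpa [descentsFrom] using (card_le_card hsub).trans (card_union_le _ _)

/-- Carlitz's labelling of the gaps of `w`: the last gap gets `0`, the gaps right after a descent
get `1, …, d` from right to left, the remaining gaps `d + 1, …, n` from left to right. -/
noncomputable def insertMaxGain (w : Equiv.Perm (Fin n)) (P : ℕ) : ℕ :=
  if 0 < P ∧ HasDescentAt w (P - 1) then descentsFrom w P + 1
  else if P < n then descentsFrom w P + P + 1 else 0

theorem majS_insertMax (p : Fin (n + 1)) (w : Equiv.Perm (Fin n)) :
    majS (insertMax p w) = majS w + insertMaxGain w p := by
  have hp : (p : ℕ) ≤ n := Fin.is_le p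
  have tail : ∑ m ∈ Ico (p : ℕ) (n + 1), descentWeight (insertMax p w) m =
      descentWeight (insertMax p w) p + (∑ m ∈ Ico (p : ℕ) n, descentWeight w m +
        descentsFrom w p) := by
    rw [sum_eq_sum_Ico_succ_bot (by omega), ← sum_Ico_add', descentsFrom, card_filter,
      ← sum_add_distrib]
    exact congrArg _ (sum_congr rfl fun m hm => descentWeight_insertMax_succ p w (mem_Ico.1 hm).1)
  rw [majS_eq_sum_range, majS_eq_sum_range, ← sum_range_add_sum_Ico _ (by omega : (p : ℕ) ≤ n + 1),
    ← sum_range_add_sum_Ico _ hp, tail, sum_range_descentWeight_insertMax,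
    sum_range_descentWeight w p, descentWeight_insertMax_self, insertMaxGain]
  have := descentsFrom_of_le w (P := p)
  split_ifs with hpn hdesc hdesc <;> try omega
  exact absurd hdesc.2.lt (by omega)

theorem descentsFrom_le (w : Equiv.Perm (Fin n)) (P : ℕ) : descentsFrom w P ≤ n - 1 - P := by
  have hsub : {m ∈ Ico P n | HasDescentAt w m} ⊆ Ico P (n - 1) := fun m hm => by
    simp only [mem_filter, mem_Ico] at hm ⊢
    have := hm.2.lt
    omega
  simpa [descentsFrom] using card_le_card hsub

theorem insertMaxGain_le (w : Equiv.Perm (Fin n)) (P : ℕ) : insertMaxGain w P ≤ n := by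
  have := descentsFrom_le w P
  unfold insertMaxGain
  split_ifs with hd
  · have := hd.2.lt
    omega
  all_goals omega

theorem insertMaxGain_ne (w : Equiv.Perm (Fin n)) {P Q : ℕ} (hPQ : P < Q) (hQ : Q ≤ n) :
    insertMaxGain w P ≠ insertMaxGain w Q := by
  have hP : descentsFrom w P + 1 ≤ insertMaxGain w P ∧
      insertMaxGain w P ≤ descentsFrom w P + P + 1 := by
    unfold insertMaxGain
    split_ifs <;> omega
  have hstep := descentsFrom_eq_succ_add w (Q - 1)
  rw [Nat.sub_add_cancel (by omega)] at hstep
  by_cases hd : HasDescentAt w (Q - 1)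
  · have hQ : insertMaxGain w Q = descentsFrom w Q + 1 := if_pos ⟨by omega, hd⟩
    have := descentsFrom_antitone w (show P ≤ Q - 1 by omega)
    rw [if_pos hd] at hstep
    omega
  · have := descentsFrom_le_add w P (Q - 1)
    rw [if_neg hd] at hstep
    by_cases hQn : Q < n
    · have hQ : insertMaxGain w Q = descentsFrom w Q + Q + 1 := by
        rw [insertMaxGain, if_neg (fun h => hd h.2), if_pos hQn]
      omega
    · have hQ : insertMaxGain w Q = 0 := by
        rw [insertMaxGain, if_neg (fun h => hd h.2), if_neg hQn]
      omega

theorem sum_pow_majS_insertMax {R : Type*} [CommSemiring R] (w : Equiv.Perm (Fin n)) (q : R) :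
    ∑ p : Fin (n + 1), q ^ majS (insertMax p w) = q ^ majS w * ∑ j ∈ range (n + 1), q ^ j := by
  let gain : Fin (n + 1) → Fin (n + 1) := fun p =>
    ⟨insertMaxGain w p, Nat.lt_succ_of_le (insertMaxGain_le w p)⟩
  have hgain : gain.Bijective := Finite.injective_iff_bijective.mp fun p p' h => by
    have h : insertMaxGain w p = insertMaxGain w p' := congrArg Fin.val h
    rcases lt_trichotomy (p : ℕ) p' with hlt | heq | hgt
    · exact absurd h (insertMaxGain_ne w hlt (Fin.is_le p'))
    · exact Fin.ext heq
    · exact absurd h.symm (insertMaxGain_ne w hgt (Fin.is_le p))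
  simp_rw [majS_insertMax, pow_add, ← mul_sum]
  rw [← Fin.sum_univ_eq_sum_range]
  exact congrArg _ (Fintype.sum_bijective gain hgain _ _ fun _ => rfl)

theorem sum_pow_majS {R : Type*} [CommSemiring R] (n : ℕ) (q : R) :
    ∑ w : Equiv.Perm (Fin n), q ^ majS w = ∏ i ∈ range n, ∑ j ∈ range (i + 1), q ^ j := by
  induction n with
  | zero => simp [majS]
  | succ n ih =>
    rw [← Fintype.sum_bijective _ insertMax_bijective _ _ fun _ => rfl, Fintype.sum_prod_type,
      sum_comm]
    simp_rw [sum_pow_majS_insertMax, ← sum_mul, ih, prod_range_succ]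

end Mahonian

section Colored

variable {n r : ℕ} {R : Type*} [CommSemiring R]

/-- Ranks the values by color first and size second, so that the flag descents of `(ω, γ ∘ ω)`
are the descents of `colorRank γ * ω`. -/
noncomputable def colorRank (γ : Fin n → ZMod r) : Equiv.Perm (Fin n) :=
  (Tuple.sort fun v => toLex ((γ v).val, v))⁻¹

theorem colorRank_lt_colorRank_iff [NeZero r] (γ : Fin n → ZMod r) (u v : Fin n) :
    colorRank γ u < colorRank γ v ↔ (γ u).val < (γ v).val ∨ γ u = γ v ∧ u < v := by
  rw [colorRank, Tuple.sort_inv_lt_sort_inv_iff, Prod.Lex.toLex_lt_toLex,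
    (ZMod.val_injective r).eq_iff]
  intro u v h
  exact congrArg Prod.snd (toLex.injective h)

theorem maj_eq_majS_colorRank [NeZero r] (ω : Equiv.Perm (Fin n)) (γ : Fin n → ZMod r) :
    maj ((ω, γ ∘ ω) : CP n r) = majS (colorRank γ * ω) := by
  unfold maj majS
  refine sum_congr (filter_congr fun i _ => ?_) fun _ _ => rfl
  by_cases h : (i : ℕ) + 1 < n
  · simp only [IsDescent, IsDescentS, dif_pos h, Equiv.Perm.mul_apply, colorRank_lt_colorRank_iff,
      Function.comp_apply, and_iff_left h, eq_comm]
  · simp [h]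

theorem col_eq_sum_val (ω : Equiv.Perm (Fin n)) (γ : Fin n → ZMod r) :
    col ((ω, γ ∘ ω) : CP n r) = ∑ v, (γ v).val :=
  Equiv.sum_comp ω fun v => (γ v).val

theorem pow_fmaj_eq [NeZero r] (q : R) (ω : Equiv.Perm (Fin n)) (γ : Fin n → ZMod r) :
    q ^ fmaj ((ω, γ ∘ ω) : CP n r) =
      (∏ v, q ^ (γ v).val) * (q ^ r) ^ majS (colorRank γ * ω) := by
  rw [fmaj, maj_eq_majS_colorRank, col_eq_sum_val, pow_add, pow_mul, prod_pow_eq_pow_sum, mul_comm]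

theorem sum_pow_fmaj_eq_mul [NeZero r] (q : R) :
    ∑ σ : CP n r, q ^ fmaj σ =
      (∑ c : ZMod r, q ^ c.val) ^ n * ∑ w : Equiv.Perm (Fin n), (q ^ r) ^ majS w := by
  have hcolor (ω : Equiv.Perm (Fin n)) : ∑ τ : Fin n → ZMod r, q ^ fmaj ((ω, τ) : CP n r) =
      ∑ γ : Fin n → ZMod r, q ^ fmaj ((ω, γ ∘ ω) : CP n r) :=
    (Fintype.sum_equiv (ω.symm.arrowCongr (Equiv.refl _)) _ _ fun γ => rfl).symm
  have hrank (γ : Fin n → ZMod r) : ∑ ω, (q ^ r) ^ majS (colorRank γ * ω) =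
      ∑ w : Equiv.Perm (Fin n), (q ^ r) ^ majS w :=
    Fintype.sum_equiv (Equiv.mulLeft (colorRank γ)) _ _ fun _ => rfl
  rw [Fintype.sum_prod_type]
  simp_rw [hcolor, pow_fmaj_eq]
  rw [sum_comm]
  simp_rw [← mul_sum, hrank]
  rw [← sum_mul, ← Fintype.prod_sum fun (_ : Fin n) (c : ZMod r) => q ^ c.val, prod_const,
    card_univ, Fintype.card_fin]

theorem sum_pow_fmaj [NeZero r] (q : R) :
    ∑ σ : CP n r, q ^ fmaj σ = ∏ i ∈ range n, ∑ j ∈ range ((i + 1) * r), q ^ j := by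
  simp_rw [sum_pow_fmaj_eq_mul, sum_pow_majS, ZMod.sum_pow_val, sum_range_mul_pow,
    prod_mul_distrib, prod_const, card_range, mul_comm]

end Colored

end ColoredPerm

open ColoredPerm in
theorem fmaj_generating_function (n r : ℕ) [NeZero r] :
    (∑ σ : CP n r, (PowerSeries.X : PowerSeries ℚ) ^ fmaj σ) =
    ∏ i ∈ Finset.range n, ∑ j ∈ Finset.range ((i + 1) * r),
      (PowerSeries.X : PowerSeries ℚ) ^ j :=
  sum_pow_fmaj _
end

section
/- Let a₁,…,a_k ∈ [n-1] and let 𝓑₁,…,𝓑_t be the blocks of [n] induced by a₁,…,a_k (the equivalence classes generated by identifying a_i with a_i + 1). Then the expected value over uniformly random (ω,τ) ∈ 𝔖_{n,r} of the product of descent indicators X_{a₁}⋯X_{a_k} equals ∏_{i=1}^t 1/|𝓑_i|!. -/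
open scoped Classical BigOperators

/-! Compare positions by their key (color, letter), ordered lexicographically: a descent at `a i`
says that the key drops from `a i` to `a i + 1`, so all descents at the `a i` hold iff the key
strictly decreases along every block. The permutations preserving each block act freely on
`𝔖_{n,r}` by permuting positions, and each orbit contains exactly one element whose key decreases
along every block: one exists because minimising `∑ x * key x` over the orbit removes every
ascent inside a block, and it is unique because a block-preserving permutation that is increasing
on each block is the identity. Hence such elements make up a `1 / ∏ |𝓑_i|!` fraction of the
group. -/

theorem Finset.apply_eq_self_of_strictMonoOn {α : Type*} [LinearOrder α] {s : Finset α}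
    {f : α → α} (hmaps : Set.MapsTo f s s) (hmono : StrictMonoOn f s) {x : α} (hx : x ∈ s) :
    f x = x := by
  set e := s.orderEmbOfFin rfl
  have hfe : f ∘ e = e := s.orderEmbOfFin_unique rfl (fun i => hmaps (s.orderEmbOfFin_mem rfl i))
    fun i j hij => hmono (s.orderEmbOfFin_mem rfl i) (s.orderEmbOfFin_mem rfl j) (e.strictMono hij)
  obtain ⟨i, rfl⟩ : x ∈ Set.range e := by rwa [s.range_orderEmbOfFin]
  exact congrFun hfe i

theorem Fintype.sum_mul_comp_swap {α R : Type*} [Fintype α] [DecidableEq α] [CommRing R]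
    (w f : α → R) {u v : α} (huv : u ≠ v) :
    ∑ x, w x * f (Equiv.swap u v x) = ∑ x, w x * f x - (w v - w u) * (f v - f u) := by
  have hdiff : ∑ x, (w x * f (Equiv.swap u v x) - w x * f x) =
      w u * (f v - f u) + w v * (f u - f v) := by
    rw [Fintype.sum_eq_add u v huv fun x hx => by
      rw [Equiv.swap_apply_of_ne_of_ne hx.1 hx.2, sub_self]]
    simp only [Equiv.swap_apply_left, Equiv.swap_apply_right]
    ring
  rw [Finset.sum_sub_distrib] at hdiff
  linear_combination hdiff

theorem Nat.mul_add_lt_mul_add_iff {m c c' w w' : ℕ} (hw : w < m) (hw' : w' < m) :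
    c' * m + w' < c * m + w ↔ c' < c ∨ c' = c ∧ w' < w := by
  rcases lt_trichotomy c' c with h | rfl | h
  · have := Nat.mul_le_mul_right m h
    rw [Nat.succ_mul] at this
    omega
  · omega
  · have := Nat.mul_le_mul_right m h
    rw [Nat.succ_mul] at this
    omega

open Finset
open scoped Nat

namespace ColoredPerm

variable {n r k : ℕ}

/-- The lexicographic order on (color, letter), encoded in `ℕ`. -/
def key (σ : CP n r) (x : Fin n) : ℕ := (σ.2 x).val * n + σ.1 x

lemma key_injective (σ : CP n r) : Function.Injective (key σ) := by
  intro x y h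
  have h' := congrArg (· % n) h
  simp only [key, Nat.mul_add_mod_of_lt (σ.1 _).isLt] at h'
  exact σ.1.injective (Fin.ext h')

lemma isDescent_iff_key_lt [NeZero r] (σ : CP n r) {p : Fin n} (hp : (p : ℕ) + 1 < n) :
    IsDescent σ p ↔ key σ ⟨p + 1, hp⟩ < key σ p := by
  rw [IsDescent, dif_pos hp, key, key, Nat.mul_add_lt_mul_add_iff (σ.1 _).isLt (σ.1 _).isLt,
    (ZMod.val_injective r).eq_iff, Fin.lt_def, eq_comm (a := σ.2 p)]

section Blocks

variable (a : Fin k → Fin n)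

lemma sameBlock_equivalence : Equivalence (SameBlock a) := Relation.EqvGen.is_equivalence _

lemma mem_blockOf {p q : Fin n} : q ∈ blockOf a p ↔ SameBlock a p q := by
  simp [blockOf]

lemma blockOf_eq_blockOf_iff {p q : Fin n} : blockOf a p = blockOf a q ↔ SameBlock a p q := by
  refine ⟨fun h => (mem_blockOf a).1 (h ▸ (mem_blockOf a).2 ((sameBlock_equivalence a).refl q)),
    fun h => Finset.ext fun x => ?_⟩
  simp only [mem_blockOf]
  exact ⟨(sameBlock_equivalence a).trans ((sameBlock_equivalence a).symm h),
    (sameBlock_equivalence a).trans h⟩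

lemma le_iff_le_of_sameBlock {p : Fin n} (hp : p ∉ Set.range a) {x y : Fin n}
    (h : SameBlock a x y) : x ≤ p ↔ y ≤ p := by
  induction h with
  | rel u v huv =>
      obtain ⟨hu, hv⟩ := huv
      have hne : u ≠ p := fun h => hp (h ▸ hu)
      rw [Fin.le_def, Fin.le_def, hv]
      have := Fin.val_ne_of_ne hne
      omega
  | refl => rfl
  | symm _ _ _ ih => exact ih.symm
  | trans _ _ _ _ _ ih₁ ih₂ => exact ih₁.trans ih₂

lemma mem_range_of_sameBlock {p q m : Fin n} (h : SameBlock a p q) (hpm : p ≤ m) (hmq : m < q) :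
    m ∈ Set.range a := by
  by_contra hm
  exact absurd ((le_iff_le_of_sameBlock a hm h).1 hpm) (not_le.2 hmq)

/-- A block is a run `p, p + 1, …, q` with `p, …, q - 1` all among the `a i`, so the drops at
the `a i` chain together. -/
lemma strictAntiOn_blockOf {β : Type*} [Preorder β] {f : Fin n → β}
    (hf : ∀ p ∈ Set.range a, ∀ hp : (p : ℕ) + 1 < n, f ⟨p + 1, hp⟩ < f p) (x : Fin n) :
    StrictAntiOn f (blockOf a x) := by
  intro y hy z hz hyz
  have hyz' : SameBlock a y z :=
    (sameBlock_equivalence a).trans ((sameBlock_equivalence a).symm ((mem_blockOf a).1 hy))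
      ((mem_blockOf a).1 hz)
  suffices ∀ j (hj : j < n), (y : ℕ) < j → j ≤ z → f ⟨j, hj⟩ < f y from this z z.isLt hyz le_rfl
  intro j hj hyj hjz
  induction j, hyj using Nat.le_induction with
  | base => exact hf y (mem_range_of_sameBlock a hyz' le_rfl hyz) hj
  | succ j hyj ih =>
      have hjn : j < n := by omega
      exact (hf ⟨j, hjn⟩ (mem_range_of_sameBlock a hyz' (Fin.le_def.2 (by simp only; omega))
        (Fin.lt_def.2 (by simp only; omega))) hj).trans (ih hjn (by omega))

def blockStabilizer : Subgroup (Equiv.Perm (Fin n)) where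
  carrier := {π | blockOf a ∘ π = blockOf a}
  mul_mem' {π π'} hπ hπ' := by
    simp only [Set.mem_ofPred_eq, Equiv.Perm.coe_mul] at *
    rw [← Function.comp_assoc, hπ, hπ']
  one_mem' := rfl
  inv_mem' {π} hπ := by
    simp only [Set.mem_ofPred_eq] at *
    conv_lhs => rw [← hπ]
    ext x
    simp

lemma mem_blockStabilizer_iff {π : Equiv.Perm (Fin n)} :
    π ∈ blockStabilizer a ↔ ∀ x, SameBlock a x (π x) := by
  change blockOf a ∘ π = blockOf a ↔ _
  simp only [funext_iff, Function.comp_apply, blockOf_eq_blockOf_iff]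
  exact forall_congr' fun x => ⟨(sameBlock_equivalence a).symm, (sameBlock_equivalence a).symm⟩

lemma swap_mem_blockStabilizer {p : Fin n} (hp : p ∈ Set.range a) (hp' : (p : ℕ) + 1 < n) :
    Equiv.swap p ⟨p + 1, hp'⟩ ∈ blockStabilizer a := by
  obtain ⟨i, rfl⟩ := hp
  have hlink : SameBlock a (a i) ⟨a i + 1, hp'⟩ := Relation.EqvGen.rel _ _ ⟨⟨i, rfl⟩, rfl⟩
  rw [mem_blockStabilizer_iff]
  intro x
  rw [Equiv.swap_apply_def]
  split_ifs with h₁ h₂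
  · exact h₁ ▸ hlink
  · exact h₂ ▸ (sameBlock_equivalence a).symm hlink
  · exact (sameBlock_equivalence a).refl x

end Blocks

section Sorting

variable (a : Fin k → Fin n)

def act (π : Equiv.Perm (Fin n)) (σ : CP n r) : CP n r := (σ.1 * π, σ.2 ∘ π)

lemma key_act (π : Equiv.Perm (Fin n)) (σ : CP n r) (x : Fin n) :
    key (act π σ) x = key σ (π x) := rfl

lemma act_act (π π' : Equiv.Perm (Fin n)) (σ : CP n r) : act π' (act π σ) = act (π * π') σ :=
  Prod.ext (mul_assoc _ _ _) rfl

lemma act_one (σ : CP n r) : act 1 σ = σ := Prod.ext (mul_one _) rfl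

lemma act_injective (π : Equiv.Perm (Fin n)) : Function.Injective (act π : CP n r → CP n r) :=
  Function.LeftInverse.injective (g := act π⁻¹) fun σ => by rw [act_act, mul_inv_cancel, act_one]

def KeyDescendsAt (σ : CP n r) : Prop :=
  ∀ p ∈ Set.range a, ∀ hp : (p : ℕ) + 1 < n, key σ ⟨p + 1, hp⟩ < key σ p

lemma exists_keyDescendsAt_act (σ : CP n r) :
    ∃ π ∈ blockStabilizer a, KeyDescendsAt a (act π σ) := by
  let Φ : Equiv.Perm (Fin n) → ℤ := fun π => ∑ x : Fin n, (x : ℤ) * key (act π σ) x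
  obtain ⟨π, hπ, hmin⟩ := (blockStabilizer a : Set (Equiv.Perm (Fin n))).toFinset.exists_min_image
    Φ ⟨1, by simp⟩
  rw [Set.mem_toFinset] at hπ
  refine ⟨π, hπ, fun p hp hp' => ?_⟩
  set q : Fin n := ⟨p + 1, hp'⟩
  have hpq : p ≠ q := Fin.ne_of_val_ne (by simp [q])
  by_contra hdesc
  have hasc := lt_of_le_of_ne (not_lt.1 hdesc) ((key_injective _).ne hpq)
  have hswap := hmin (π * Equiv.swap p q)
    (Set.mem_toFinset.2 (mul_mem hπ (swap_mem_blockStabilizer a hp hp')))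
  have hΦ : Φ (π * Equiv.swap p q) =
      ∑ x : Fin n, (x : ℤ) * key (act π σ) (Equiv.swap p q x) := rfl
  rw [hΦ, Fintype.sum_mul_comp_swap _ (fun x => (key (act π σ) x : ℤ)) hpq] at hswap
  have hpos : 0 < ((q : ℤ) - p) * (key (act π σ) q - key (act π σ) p) :=
    mul_pos (by simp [q]) (by rw [sub_pos]; exact_mod_cast hasc)
  simp only [Φ] at hswap
  linarith

lemma eq_one_of_keyDescendsAt_act {ρ : Equiv.Perm (Fin n)} (hρ : ρ ∈ blockStabilizer a)
    {δ : CP n r} (hδ : KeyDescendsAt a δ) (hρδ : KeyDescendsAt a (act ρ δ)) : ρ = 1 := by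
  ext x
  have hmaps : Set.MapsTo ρ (blockOf a x) (blockOf a x) := fun y hy => (mem_blockOf a).2 <|
    (sameBlock_equivalence a).trans ((mem_blockOf a).1 hy) ((mem_blockStabilizer_iff a).1 hρ y)
  have hmono : StrictMonoOn ρ (blockOf a x) := fun y hy z hz hyz =>
    (StrictAntiOn.lt_iff_gt (strictAntiOn_blockOf a hδ x) (hmaps hz) (hmaps hy)).1
      (strictAntiOn_blockOf a hρδ x hy hz hyz)
  exact congrArg Fin.val (Finset.apply_eq_self_of_strictMonoOn hmaps hmono
    ((mem_blockOf a).2 ((sameBlock_equivalence a).refl x)))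

lemma card_eq_card_blockStabilizer_mul [NeZero r] :
    Fintype.card (CP n r) =
      Fintype.card (blockStabilizer a) * #{σ : CP n r | KeyDescendsAt a σ} := by
  rw [Fintype.card_subtype, ← card_product, ← card_univ]
  refine (card_nbij (fun z => act z.1 z.2) (fun _ _ => mem_univ _) ?_ ?_).symm
  · rintro ⟨π, δ⟩ hz ⟨π', δ'⟩ hz' (heq : act π δ = act π' δ')
    simp only [coe_product, Set.mem_prod, coe_filter, mem_univ, true_and, Set.mem_ofPred_eq]
      at hz hz'
    have hπ : π' * π⁻¹ = 1 := eq_one_of_keyDescendsAt_act a (mul_mem hz'.1 (inv_mem hz.1)) hz'.2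
      (by rw [← act_act, ← heq, act_act, mul_inv_cancel, act_one]; exact hz.2)
    obtain rfl := (mul_inv_eq_one.1 hπ).symm
    rw [act_injective π heq]
  · intro σ _
    obtain ⟨π, hπ, hσ⟩ := exists_keyDescendsAt_act a σ
    refine ⟨(π⁻¹, act π σ), ?_,
      show act π⁻¹ (act π σ) = σ by rw [act_act, mul_inv_cancel, act_one]⟩
    simp [inv_mem hπ, hσ]

lemma card_blockStabilizer :
    Fintype.card (blockStabilizer a) = ∏ b ∈ blocks a, b.card ! := by
  rw [show Fintype.card (blockStabilizer a) =
      Fintype.card {π : Equiv.Perm (Fin n) // blockOf a ∘ π = blockOf a} from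
    Fintype.card_congr (Equiv.refl _), DomMulAct.stabilizer_card']
  refine prod_congr rfl fun b hb => ?_
  obtain ⟨p, -, rfl⟩ := mem_image.1 hb
  rw [Fintype.card_subtype]
  congr 2
  ext q
  simp only [mem_filter, mem_univ, true_and, blockOf_eq_blockOf_iff, mem_blockOf]
  exact ⟨(sameBlock_equivalence a).symm, (sameBlock_equivalence a).symm⟩

end Sorting

lemma forall_isDescent_iff_keyDescendsAt [NeZero r] {a : Fin k → Fin n}
    (ha : ∀ i, (a i : ℕ) + 1 < n) (σ : CP n r) :
    (∀ i, IsDescent σ (a i)) ↔ KeyDescendsAt a σ := by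
  refine ⟨?_, fun h i => (isDescent_iff_key_lt σ (ha i)).2 (h _ ⟨i, rfl⟩ (ha i))⟩
  rintro h _ ⟨i, rfl⟩ hp
  exact (isDescent_iff_key_lt σ hp).1 (h i)

end ColoredPerm

open ColoredPerm in
theorem expectation_descent_product (n r k : ℕ) [NeZero r] (a : Fin k → Fin n)
    (ha : ∀ i, (a i : ℕ) + 1 < n) :
    E Finset.univ (fun σ : CP n r => ∏ i, X (a i) σ) = blockProd a := by
  have hprod (σ : CP n r) : ∏ i, X (a i) σ = if KeyDescendsAt a σ then 1 else 0 := by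
    simp only [X, Fintype.prod_boole, forall_isDescent_iff_keyDescendsAt ha]
  have hcard := card_eq_card_blockStabilizer_mul a (r := r)
  have hsorted : #{σ : CP n r | KeyDescendsAt a σ} ≠ 0 :=
    right_ne_zero_of_mul (hcard ▸ Fintype.card_ne_zero)
  rw [E, Finset.sum_congr rfl fun σ _ => hprod σ, Finset.sum_boole, card_univ, hcard, blockProd]
  simp only [one_div, prod_inv_distrib, ← Nat.cast_prod, ← card_blockStabilizer]
  push_cast
  field_simp
end

section
/- For any 1 ≤ m < n, the probability that a uniformly random (ω,τ) ∈ 𝔖_{n,r} has descents at all positions m+1, m+2, …, n equals ((r-1)/r)^{n-m} · 1/(n-m)!. -/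
open scoped Classical BigOperators

/-!
Descents at all positions `m+1, …, n` say exactly that the tail colours are nonzero and the
pairs `(τ(i), ω(i))`, `i > m`, strictly decrease lexicographically; colours then weakly
decrease, so a nonzero last colour makes all tail colours nonzero. Permuting the tail
positions is a free action of `𝔖_{n-m}` on the elements with nonzero tail colours, and each
orbit contains exactly one element with decreasing tail pairs (its sorted arrangement). Hence
the descent set has `n! r^m (r-1)^(n-m) / (n-m)!` elements.
-/

open Finset
open scoped Nat

theorem Equiv.Perm.eq_of_strictAnti_comp_eq {β γ : Type*} [LinearOrder β] [WellFoundedGT β]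
    [Preorder γ] {f g : β → γ} (hf : StrictAnti f) (hg : StrictAnti g)
    {π π' : Equiv.Perm β} (h : f ∘ π = g ∘ π') : π = π' := by
  have hfg : f = g := by
    rw [← hf.range_inj hg, ← EquivLike.range_comp f π, ← EquivLike.range_comp g π', h]
  subst hfg
  exact Equiv.ext (congrFun (hf.injective.comp_left h))

theorem Tuple.exists_strictAnti_comp_perm {k : ℕ} {α : Type*} [LinearOrder α] {f : Fin k → α}
    (hf : Function.Injective f) : ∃ π : Equiv.Perm (Fin k), StrictAnti (f ∘ π) :=
  ⟨Tuple.sort (OrderDual.toDual ∘ f),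
    Antitone.strictAnti_of_injective (Tuple.monotone_sort (OrderDual.toDual ∘ f))
      (hf.comp (Equiv.injective _))⟩

namespace ColoredPerm

variable {m k r : ℕ}

def tailKey (σ : CP (m + k) r) (j : Fin k) : ℕ ×ₗ Fin (m + k) :=
  toLex ((σ.2 (Fin.natAdd m j)).val, σ.1 (Fin.natAdd m j))

theorem tailKey_injective (σ : CP (m + k) r) : Function.Injective (tailKey σ) :=
  fun a b h => by simpa [tailKey] using congrArg (fun x => (ofLex x).2) h

theorem forall_isDescent_ge_iff (σ : CP (m + k) r) :
    (∀ i : Fin (m + k), m ≤ (i : ℕ) → IsDescent σ i) ↔ ∀ j, IsDescent σ (Fin.natAdd m j) := by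
  simp [Fin.forall_fin_add]

theorem isDescent_natAdd_castSucc_iff [NeZero r] (σ : CP (m + (k + 1)) r) (j : Fin k) :
    IsDescent σ (Fin.natAdd m j.castSucc) ↔ tailKey σ j.succ < tailKey σ j.castSucc := by
  have h : (Fin.natAdd m j.castSucc : ℕ) + 1 < m + (k + 1) := by simp; omega
  have e : Fin.natAdd m j.succ = ⟨(Fin.natAdd m j.castSucc : ℕ) + 1, h⟩ :=
    Fin.ext (by simp; omega)
  rw [IsDescent, dif_pos h, tailKey, tailKey, Prod.Lex.toLex_lt_toLex, e,
    (ZMod.val_injective r).eq_iff, eq_comm]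

theorem isDescent_natAdd_last_iff (σ : CP (m + (k + 1)) r) :
    IsDescent σ (Fin.natAdd m (Fin.last k)) ↔ σ.2 (Fin.natAdd m (Fin.last k)) ≠ 0 := by
  rw [IsDescent, dif_neg (by simp; omega), Ne, ZMod.val_eq_zero]

theorem forall_tail_ne_zero_iff_last {σ : CP (m + (k + 1)) r} (h : StrictAnti (tailKey σ)) :
    (∀ j, σ.2 (Fin.natAdd m j) ≠ 0) ↔ σ.2 (Fin.natAdd m (Fin.last k)) ≠ 0 := by
  refine ⟨fun hc => hc _, fun hc j => ?_⟩
  have := Prod.Lex.monotone_fst _ _ (h.antitone (Fin.le_last j))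
  simp only [tailKey, ofLex_toLex] at this
  rw [Ne, ← ZMod.val_eq_zero] at hc ⊢
  omega

theorem forall_isDescent_tail_iff [NeZero r] (σ : CP (m + k) r) :
    (∀ i : Fin (m + k), m ≤ (i : ℕ) → IsDescent σ i) ↔
      StrictAnti (tailKey σ) ∧ ∀ j, σ.2 (Fin.natAdd m j) ≠ 0 := by
  rw [forall_isDescent_ge_iff]
  cases k with
  | zero => simp [Subsingleton.strictAnti]
  | succ k =>
    rw [Fin.forall_fin_succ', isDescent_natAdd_last_iff, Fin.strictAnti_iff_succ_lt]
    simp only [isDescent_natAdd_castSucc_iff, ← Fin.strictAnti_iff_succ_lt]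
    exact ⟨fun ⟨h, hc⟩ => ⟨h, (forall_tail_ne_zero_iff_last h).2 hc⟩,
      fun ⟨h, hc⟩ => ⟨h, hc _⟩⟩

def tailShuffle (π : Equiv.Perm (Fin k)) : Equiv.Perm (Fin (m + k)) :=
  finSumFinEquiv.permCongr (Equiv.Perm.sumCongr 1 π)

theorem tailShuffle_natAdd (π : Equiv.Perm (Fin k)) (j : Fin k) :
    tailShuffle (m := m) π (Fin.natAdd m j) = Fin.natAdd m (π j) := by
  simp [tailShuffle]

theorem tailShuffle_mul (π π' : Equiv.Perm (Fin k)) :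
    tailShuffle (m := m) (π * π') = tailShuffle π * tailShuffle π' := by
  rw [tailShuffle, tailShuffle, tailShuffle, ← Equiv.permCongr_mul, Equiv.Perm.sumCongr_mul,
    one_mul]

theorem tailShuffle_one : tailShuffle (m := m) (1 : Equiv.Perm (Fin k)) = 1 := by
  rw [tailShuffle, Equiv.Perm.sumCongr_one]
  exact finSumFinEquiv.permCongr_refl

def permuteTail (π : Equiv.Perm (Fin k)) (σ : CP (m + k) r) : CP (m + k) r :=
  (σ.1 * tailShuffle π, σ.2 ∘ tailShuffle π)

theorem permuteTail_permuteTail (π π' : Equiv.Perm (Fin k)) (σ : CP (m + k) r) :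
    permuteTail π (permuteTail π' σ) = permuteTail (π' * π) σ := by
  simp [permuteTail, tailShuffle_mul, mul_assoc, Function.comp_assoc]

theorem permuteTail_one (σ : CP (m + k) r) : permuteTail 1 σ = σ := by
  simp [permuteTail, tailShuffle_one]

theorem permuteTail_injective (π : Equiv.Perm (Fin k)) :
    Function.Injective (permuteTail (m := m) (r := r) π) :=
  Function.LeftInverse.injective (g := permuteTail π⁻¹) fun σ => by
    rw [permuteTail_permuteTail, mul_inv_cancel, permuteTail_one]

theorem tailKey_permuteTail (π : Equiv.Perm (Fin k)) (σ : CP (m + k) r) :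
    tailKey (permuteTail π σ) = tailKey σ ∘ π := by
  funext j
  simp [tailKey, permuteTail, tailShuffle_natAdd]

theorem forall_tail_ne_zero_permuteTail_iff (π : Equiv.Perm (Fin k)) (σ : CP (m + k) r) :
    (∀ j, (permuteTail π σ).2 (Fin.natAdd m j) ≠ 0) ↔ ∀ j, σ.2 (Fin.natAdd m j) ≠ 0 := by
  simp only [permuteTail, Function.comp_apply, tailShuffle_natAdd]
  exact π.forall_congr_right (q := fun j => σ.2 (Fin.natAdd m j) ≠ 0)

theorem card_tailKey_strictAnti_mul_factorial [NeZero r] :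
    #{σ : CP (m + k) r | StrictAnti (tailKey σ) ∧ ∀ j, σ.2 (Fin.natAdd m j) ≠ 0} * k ! =
      #{σ : CP (m + k) r | ∀ j, σ.2 (Fin.natAdd m j) ≠ 0} := by
  have hcard_perm : k ! = #(univ : Finset (Equiv.Perm (Fin k))) := by
    rw [card_univ, Fintype.card_perm, Fintype.card_fin]
  rw [hcard_perm, ← card_product]
  refine card_nbij (fun p => permuteTail p.2 p.1) ?_ ?_ ?_
  · rintro ⟨σ, π⟩ hσ
    simp only [coe_product, Set.mem_prod, mem_coe, mem_filter_univ] at hσ ⊢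
    exact (forall_tail_ne_zero_permuteTail_iff π σ).2 hσ.1.2
  · rintro ⟨σ, π⟩ hσ ⟨σ', π'⟩ hσ' h
    simp only [coe_product, Set.mem_prod, mem_coe, mem_filter_univ] at hσ hσ' h
    have hπ : π = π' := Equiv.Perm.eq_of_strictAnti_comp_eq hσ.1.1 hσ'.1.1 <| by
      rw [← tailKey_permuteTail, ← tailKey_permuteTail, h]
    subst hπ
    rw [permuteTail_injective π h]
  · intro τ hτ
    simp only [mem_coe, mem_filter_univ] at hτ
    obtain ⟨π, hπ⟩ := Tuple.exists_strictAnti_comp_perm (tailKey_injective τ)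
    refine ⟨(permuteTail π τ, π⁻¹), ?_, ?_⟩
    · simp only [coe_product, Set.mem_prod, mem_coe, mem_filter_univ, mem_univ, and_true]
      exact ⟨tailKey_permuteTail π τ ▸ hπ, (forall_tail_ne_zero_permuteTail_iff π τ).2 hτ⟩
    · simp only [permuteTail_permuteTail, mul_inv_cancel, permuteTail_one]

theorem card_tail_ne_zero [NeZero r] :
    #{σ : CP (m + k) r | ∀ j, σ.2 (Fin.natAdd m j) ≠ 0} = (m + k)! * (r ^ m * (r - 1) ^ k) := by
  have hsplit : ({σ : CP (m + k) r | ∀ j, σ.2 (Fin.natAdd m j) ≠ 0} : Finset _) =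
      univ ×ˢ Fintype.piFinset (Fin.addCases (fun _ => univ) (fun _ => {0}ᶜ)) := by
    ext σ
    simp [Fin.forall_fin_add]
  rw [hsplit, card_product, card_univ, Fintype.card_perm, Fintype.card_fin,
    Fintype.card_piFinset, Fin.prod_univ_add]
  simp [card_compl]

theorem card_forall_isDescent_tail_mul_factorial [NeZero r] :
    #{σ : CP (m + k) r | ∀ i : Fin (m + k), m ≤ (i : ℕ) → IsDescent σ i} * k ! =
      (m + k)! * (r ^ m * (r - 1) ^ k) := by
  simp only [forall_isDescent_tail_iff]
  rw [card_tailKey_strictAnti_mul_factorial, card_tail_ne_zero]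

end ColoredPerm

open ColoredPerm in
theorem prob_descents_tail_general (n r m : ℕ) [NeZero r] (hmn : m < n) :
    E Finset.univ (fun σ : CP n r =>
        if ∀ i : Fin n, m ≤ (i : ℕ) → IsDescent σ i then 1 else 0) =
      (((r : ℚ) - 1) / r) ^ (n - m) * (1 / Nat.factorial (n - m)) := by
  obtain ⟨k, rfl⟩ := Nat.exists_eq_add_of_le hmn.le
  have hcount := congrArg (Nat.cast : ℕ → ℚ)
    (card_forall_isDescent_tail_mul_factorial (m := m) (k := k) (r := r))
  push_cast [Nat.cast_pred (NeZero.pos r)] at hcount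
  rw [← eq_div_iff (by positivity)] at hcount
  have hr : (r : ℚ) ≠ 0 := Nat.cast_ne_zero.mpr (NeZero.ne r)
  rw [E, sum_boole, hcount, card_univ, Fintype.card_prod, Fintype.card_perm, Fintype.card_fun,
    ZMod.card, Fintype.card_fin, Nat.add_sub_cancel_left]
  push_cast
  rw [pow_add, div_pow]
  field_simp

open ColoredPerm in
theorem prob_descents_tail (n r m : ℕ) [NeZero r] (hm : 1 ≤ m) (hmn : m < n) :
    E Finset.univ (fun σ : CP n r =>
        if ∀ i : Fin n, m ≤ (i : ℕ) → IsDescent σ i then 1 else 0) =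
      (((r : ℚ) - 1) / r) ^ (n - m) * (1 / Nat.factorial (n - m)) :=
  prob_descents_tail_general n r m hmn
end

section
/- For a uniformly random (ω,τ) ∈ 𝔖_{n,r}, having descents at all of positions m+1,…,n is equivalent to: τ(i) ≠ 0 for all i > m, and ω has descents at positions m+1,…,n-1 in the colored order. In particular P[descents at m+1,…,n] = P[τ(i) ≠ 0 for all i > m] · P[descents at m+1,…,n-1 | τ(i) ≠ 0 for all i > m]. -/
open scoped Classical BigOperators

/-!
In the colored order a descent at a position `i < n` forces the color at `i` to be at least the
color at `i + 1`, and a descent at `n` means exactly that the last color is nonzero. Hence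
descents at `m + 1, …, n` force every color after `m` to be nonzero, and conversely, once those
colors are nonzero the descent at `n` is automatic. The probability identity is then the chain
rule `P[A] = P[B] · P[A | B]` for events `A ⊆ B`.
-/

namespace ColoredPerm

variable {n r : ℕ}

theorem isDescent_iff_val_ne_zero {σ : CP n r} {i : Fin n} (hi : ¬ (i : ℕ) + 1 < n) :
    IsDescent σ i ↔ (σ.2 i).val ≠ 0 := by
  rw [IsDescent, dif_neg hi]

theorem IsDescent.val_ne_zero_of_succ {σ : CP n r} {i : Fin n} (hd : IsDescent σ i)
    (hi : (i : ℕ) + 1 < n) (hsucc : (σ.2 ⟨(i : ℕ) + 1, hi⟩).val ≠ 0) :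
    (σ.2 i).val ≠ 0 := by
  rw [IsDescent, dif_pos hi] at hd
  rcases hd with hlt | ⟨heq, -⟩
  · omega
  · rwa [heq]

theorem val_ne_zero_of_forall_isDescent {m : ℕ} {σ : CP n r}
    (h : ∀ i : Fin n, m ≤ (i : ℕ) → IsDescent σ i) (i : Fin n) (hi : m ≤ (i : ℕ)) :
    (σ.2 i).val ≠ 0 := by
  induction hk : n - 1 - (i : ℕ) generalizing i with
  | zero => exact (isDescent_iff_val_ne_zero (by omega)).1 (h i hi)
  | succ k ih =>
    have hlt : (i : ℕ) + 1 < n := by omega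
    exact (h i hi).val_ne_zero_of_succ hlt
      (ih ⟨(i : ℕ) + 1, hlt⟩ (show m ≤ (i : ℕ) + 1 by omega)
        (show n - 1 - ((i : ℕ) + 1) = k by omega))

theorem forall_isDescent_iff {m : ℕ} (σ : CP n r) :
    (∀ i : Fin n, m ≤ (i : ℕ) → IsDescent σ i) ↔
      ((∀ i : Fin n, m ≤ (i : ℕ) → (σ.2 i).val ≠ 0) ∧
        (∀ i : Fin n, m ≤ (i : ℕ) → (i : ℕ) + 1 < n → IsDescent σ i)) := by
  refine ⟨fun h => ⟨val_ne_zero_of_forall_isDescent h, fun i hi _ => h i hi⟩, ?_⟩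
  rintro ⟨hcol, hdes⟩ i hi
  by_cases hlt : (i : ℕ) + 1 < n
  · exact hdes i hi hlt
  · exact (isDescent_iff_val_ne_zero hlt).2 (hcol i hi)

end ColoredPerm

theorem Finset.card_div_eq_card_div_mul_card_div {α K : Type*} [Semifield K] [CharZero K]
    {s t u : Finset α} (hst : s ⊆ t) :
    (s.card : K) / u.card = (t.card : K) / u.card * ((s.card : K) / t.card) := by
  rcases t.eq_empty_or_nonempty with rfl | ht
  · simp [Finset.subset_empty.1 hst]
  · exact (div_mul_div_cancel₀' (by exact_mod_cast ht.card_pos.ne') _ _).symm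

open ColoredPerm in
theorem descents_tail_decomposition_general (n r m : ℕ) [NeZero r] :
    (∀ σ : CP n r,
      (∀ i : Fin n, m ≤ (i : ℕ) → IsDescent σ i) ↔
        ((∀ i : Fin n, m ≤ (i : ℕ) → (σ.2 i).val ≠ 0) ∧
          (∀ i : Fin n, m ≤ (i : ℕ) → (i : ℕ) + 1 < n → IsDescent σ i))) ∧
    ((Finset.univ.filter
          (fun σ : CP n r => ∀ i : Fin n, m ≤ (i : ℕ) → IsDescent σ i)).card : ℚ) /
        ((Finset.univ : Finset (CP n r)).card : ℚ) =
      (((Finset.univ.filter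
            (fun σ : CP n r => ∀ i : Fin n, m ≤ (i : ℕ) → (σ.2 i).val ≠ 0)).card : ℚ) /
          ((Finset.univ : Finset (CP n r)).card : ℚ)) *
        (((Finset.univ.filter (fun σ : CP n r =>
              (∀ i : Fin n, m ≤ (i : ℕ) → (i : ℕ) + 1 < n → IsDescent σ i) ∧
              (∀ i : Fin n, m ≤ (i : ℕ) → (σ.2 i).val ≠ 0))).card : ℚ) /
          ((Finset.univ.filter
              (fun σ : CP n r => ∀ i : Fin n, m ≤ (i : ℕ) → (σ.2 i).val ≠ 0)).card : ℚ)) := by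
  refine ⟨forall_isDescent_iff, ?_⟩
  have htail :
      (Finset.univ.filter fun σ : CP n r => ∀ i : Fin n, m ≤ (i : ℕ) → IsDescent σ i) =
        Finset.univ.filter fun σ : CP n r =>
          (∀ i : Fin n, m ≤ (i : ℕ) → (i : ℕ) + 1 < n → IsDescent σ i) ∧
            (∀ i : Fin n, m ≤ (i : ℕ) → (σ.2 i).val ≠ 0) :=
    Finset.filter_congr fun σ _ => (forall_isDescent_iff σ).trans and_comm
  rw [htail]
  exact Finset.card_div_eq_card_div_mul_card_div
    (Finset.monotone_filter_right _ fun _ _ h => h.2)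

open ColoredPerm in
theorem descents_tail_decomposition (n r m : ℕ) [NeZero r] (hmn : m < n) :
    (∀ σ : CP n r,
      (∀ i : Fin n, m ≤ (i : ℕ) → IsDescent σ i) ↔
        ((∀ i : Fin n, m ≤ (i : ℕ) → (σ.2 i).val ≠ 0) ∧
          (∀ i : Fin n, m ≤ (i : ℕ) → (i : ℕ) + 1 < n → IsDescent σ i))) ∧
    ((Finset.univ.filter
          (fun σ : CP n r => ∀ i : Fin n, m ≤ (i : ℕ) → IsDescent σ i)).card : ℚ) /
        ((Finset.univ : Finset (CP n r)).card : ℚ) =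
      (((Finset.univ.filter
            (fun σ : CP n r => ∀ i : Fin n, m ≤ (i : ℕ) → (σ.2 i).val ≠ 0)).card : ℚ) /
          ((Finset.univ : Finset (CP n r)).card : ℚ)) *
        (((Finset.univ.filter (fun σ : CP n r =>
              (∀ i : Fin n, m ≤ (i : ℕ) → (i : ℕ) + 1 < n → IsDescent σ i) ∧
              (∀ i : Fin n, m ≤ (i : ℕ) → (σ.2 i).val ≠ 0))).card : ℚ) /
          ((Finset.univ.filter
              (fun σ : CP n r => ∀ i : Fin n, m ≤ (i : ℕ) → (σ.2 i).val ≠ 0)).card : ℚ)) :=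
  descents_tail_decomposition_general n r m
end

section
/- Let a₁,…,a_j ∈ [m-1] ⊆ [n]. Then the events {descents at all of a₁,…,a_j} and {descents at all of m+1,…,n} are independent for uniformly random (ω,τ) ∈ 𝔖_{n,r}: E[X_{a₁}⋯X_{a_j}·X_{m+1}X_{m+2}⋯X_n] = E[X_{a₁}⋯X_{a_j}] · E[X_{m+1}⋯X_n]. -/
open scoped Classical BigOperators

/-!
A function of a coloured permutation that sees only the relative order of the values and the
colours at the positions in a set `P` is uncorrelated with one that sees only the positions
outside `P`. Indeed, permuting the positions inside `P` and adding arbitrary colours on `P`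
preserves the uniform measure and does not change the second function, while averaging the first
over all these moves gives a constant, since any two orderings of `P` differ by a permutation
of `P`. The descents at `a₁, …, a_j` see only positions `≤ m`, those at `m + 1, …, n` only
positions `> m`.
-/

theorem exists_equiv_fin_lt_iff {α β : Type*} [Fintype α] [LinearOrder β] {v : α → β}
    (hv : Function.Injective v) :
    ∃ e : α ≃ Fin (Fintype.card α), ∀ p q, e p < e q ↔ v p < v q := by
  set g := v ∘ (Fintype.equivFin α).symm
  have hsorted : StrictMono (g ∘ Tuple.sort g) :=
    (Tuple.monotone_sort g).strictMono_of_injective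
      ((hv.comp (Fintype.equivFin α).symm.injective).comp (Tuple.sort g).injective)
  refine ⟨(Fintype.equivFin α).trans (Tuple.sort g).symm, fun p q => ?_⟩
  simpa [g] using (hsorted.lt_iff_lt (a := (Tuple.sort g).symm (Fintype.equivFin α p))
    (b := (Tuple.sort g).symm (Fintype.equivFin α q))).symm

theorem exists_perm_lt_iff_lt {α β : Type*} [Finite α] [LinearOrder β] {v v' : α → β}
    (hv : Function.Injective v) (hv' : Function.Injective v') :
    ∃ u : Equiv.Perm α, ∀ p q, v p < v q ↔ v' (u p) < v' (u q) := by
  have := Fintype.ofFinite α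
  obtain ⟨e, he⟩ := exists_equiv_fin_lt_iff hv
  obtain ⟨e', he'⟩ := exists_equiv_fin_lt_iff hv'
  exact ⟨e.trans e'.symm, fun p q => by simp [← he, ← he']⟩

theorem sum_mul_sum_eq_card_mul_sum_mul {X I R : Type*} [Fintype X] [Fintype I] [Nonempty I]
    [Field R] [CharZero R] (e : I → Equiv.Perm X) (F G : X → R)
    (hG : ∀ i x, G (e i x) = G x) (hF : ∀ x y, ∑ i, F (e i x) = ∑ i, F (e i y)) :
    (∑ x, F x) * ∑ x, G x = Fintype.card X * ∑ x, F x * G x := by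
  set S : X → R := fun x => ∑ i, F (e i x)
  have hS : ∑ x, S x = Fintype.card I * ∑ x, F x := by
    rw [Finset.sum_comm, ← nsmul_eq_mul, ← Finset.card_univ, ← Finset.sum_const]
    exact Finset.sum_congr rfl fun i _ => Equiv.sum_comp (e i) F
  have hSG : ∑ x, S x * G x = Fintype.card I * ∑ x, F x * G x := by
    calc ∑ x, S x * G x = ∑ i, ∑ x, F (e i x) * G (e i x) := by
          simp only [S, Finset.sum_mul, hG]; exact Finset.sum_comm
      _ = Fintype.card I * ∑ x, F x * G x := by
          rw [← nsmul_eq_mul, ← Finset.card_univ, ← Finset.sum_const]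
          exact Finset.sum_congr rfl fun i _ => Equiv.sum_comp (e i) (fun x => F x * G x)
  have hI : (Fintype.card I : R) ≠ 0 := Nat.cast_ne_zero.mpr Fintype.card_ne_zero
  apply mul_left_cancel₀ hI
  calc (Fintype.card I : R) * ((∑ x, F x) * ∑ x, G x) = ∑ y, ∑ x, S y * G x := by
        rw [← mul_assoc, ← hS, Finset.sum_mul_sum]
    _ = ∑ _y : X, ∑ x, S x * G x :=
        Finset.sum_congr rfl fun y _ =>
          Finset.sum_congr rfl fun x _ => congrArg (· * G x) (hF y x)
    _ = Fintype.card I * (Fintype.card X * ∑ x, F x * G x) := by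
        rw [Finset.sum_const, Finset.card_univ, hSG, nsmul_eq_mul]; ring

namespace ColoredPerm

open Equiv

variable {n r : ℕ}

def DependsOnPatternOn {β : Type*} (P : Fin n → Prop) (f : CP n r → β) : Prop :=
  ∀ ⦃σ σ' : CP n r⦄, (∀ p q, P p → P q → (σ.1 p < σ.1 q ↔ σ'.1 p < σ'.1 q)) →
    (∀ p, P p → σ.2 p = σ'.2 p) → f σ = f σ'

theorem DependsOnPatternOn.prod {β ι : Type*} [CommMonoid β] {P : Fin n → Prop}
    {s : Finset ι} {f : ι → CP n r → β} (hf : ∀ i ∈ s, DependsOnPatternOn P (f i)) :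
    DependsOnPatternOn P fun σ => ∏ i ∈ s, f i σ :=
  fun _ _ hord hcol => Finset.prod_congr rfl fun i hi => hf i hi hord hcol

theorem dependsOnPatternOn_X {P : Fin n → Prop} {i : Fin n} (hi : P i)
    (hsucc : ∀ h : (i : ℕ) + 1 < n, P ⟨i + 1, h⟩) :
    DependsOnPatternOn (r := r) P (X i) := by
  intro σ σ' hord hcol
  have hdes : IsDescent σ i ↔ IsDescent σ' i := by
    unfold IsDescent
    split_ifs with h
    · rw [hcol _ hi, hcol _ (hsucc h), hord _ _ (hsucc h) hi]
    · rw [hcol _ hi]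
  simp only [X, hdes]

section shift

variable (P : Fin n → Prop) [DecidablePred P]

def shiftOn (x : Perm {p // P p} × (Fin n → ZMod r)) : Perm (CP n r) :=
  (Equiv.mulRight (Perm.ofSubtype x.1)).prodCongr
    ((Equiv.arrowCongr (Perm.ofSubtype x.1).symm (Equiv.refl _)).trans
      (Equiv.addRight fun p => if P p then x.2 p else 0))

variable {P}

theorem shiftOn_apply (x : Perm {p // P p} × (Fin n → ZMod r)) (σ : CP n r) :
    shiftOn P x σ =
      (σ.1 * Perm.ofSubtype x.1,
        fun p => σ.2 (Perm.ofSubtype x.1 p) + if P p then x.2 p else 0) :=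
  rfl

theorem DependsOnPatternOn.apply_shiftOn {β : Type*} {g : CP n r → β}
    (hg : DependsOnPatternOn (fun p => ¬ P p) g) (x : Perm {p // P p} × (Fin n → ZMod r))
    (σ : CP n r) : g (shiftOn P x σ) = g σ := by
  refine hg (fun p q hp hq => ?_) fun p hp => ?_
  · simp [shiftOn_apply, Perm.ofSubtype_apply_of_not_mem, hp, hq]
  · simp [shiftOn_apply, Perm.ofSubtype_apply_of_not_mem, hp]

theorem DependsOnPatternOn.sum_shiftOn {M : Type*} [AddCommMonoid M] [NeZero r]
    {f : CP n r → M} (hf : DependsOnPatternOn P f) (σ : CP n r) :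
    ∑ x, f (shiftOn P x σ) = ∑ h : Perm {p // P p}, ∑ c, f (σ.1 * Perm.ofSubtype h, c) := by
  rw [Fintype.sum_prod_type]
  refine Finset.sum_congr rfl fun h _ => ?_
  calc ∑ t, f (shiftOn P (h, t) σ)
      = ∑ t, f (σ.1 * Perm.ofSubtype h, σ.2 ∘ Perm.ofSubtype h + t) :=
        Finset.sum_congr rfl fun t _ => hf (fun _ _ _ _ => Iff.rfl) fun p hp => by
          simp [shiftOn_apply, hp]
    _ = ∑ c, f (σ.1 * Perm.ofSubtype h, c) :=
        Equiv.sum_comp (Equiv.addLeft _) fun c => f (σ.1 * Perm.ofSubtype h, c)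

theorem DependsOnPatternOn.sum_mul_ofSubtype_eq {M : Type*} [AddCommMonoid M] [NeZero r]
    {f : CP n r → M} (hf : DependsOnPatternOn P f) (w w' : Perm (Fin n)) :
    ∑ h : Perm {p // P p}, ∑ c, f (w * Perm.ofSubtype h, c) =
      ∑ h : Perm {p // P p}, ∑ c, f (w' * Perm.ofSubtype h, c) := by
  obtain ⟨u, hu⟩ := exists_perm_lt_iff_lt (v := fun p : {p // P p} => w p)
    (v' := fun p : {p // P p} => w' p) (w.injective.comp Subtype.val_injective)
    (w'.injective.comp Subtype.val_injective)
  calc ∑ h : Perm {p // P p}, ∑ c, f (w * Perm.ofSubtype h, c)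
      = ∑ h : Perm {p // P p}, ∑ c, f (w' * Perm.ofSubtype (u * h), c) :=
        Finset.sum_congr rfl fun h _ => Finset.sum_congr rfl fun c _ =>
          hf (fun p q hp hq => by
            simpa [Perm.ofSubtype_apply_of_mem, hp, hq] using hu (h ⟨p, hp⟩) (h ⟨q, hq⟩))
            fun _ _ => rfl
    _ = ∑ h : Perm {p // P p}, ∑ c, f (w' * Perm.ofSubtype h, c) :=
        Equiv.sum_comp (Equiv.mulLeft u) fun h => ∑ c, f (w' * Perm.ofSubtype h, c)

end shift

theorem DependsOnPatternOn.sum_mul_sum {R : Type*} [Field R] [CharZero R] [NeZero r]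
    {P : Fin n → Prop} {f g : CP n r → R} (hf : DependsOnPatternOn P f)
    (hg : DependsOnPatternOn (fun p => ¬ P p) g) :
    (∑ σ, f σ) * ∑ σ, g σ = Fintype.card (CP n r) * ∑ σ, f σ * g σ :=
  sum_mul_sum_eq_card_mul_sum_mul (shiftOn P) f g hg.apply_shiftOn fun σ σ' => by
    rw [hf.sum_shiftOn, hf.sum_shiftOn, hf.sum_mul_ofSubtype_eq]

end ColoredPerm

open ColoredPerm in
theorem descent_tail_independent_general (n r m j : ℕ) [NeZero r]
    (a : Fin j → Fin n) (ha : ∀ i, (a i : ℕ) + 1 < m) :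
    E Finset.univ (fun σ : CP n r =>
        (∏ i, X (a i) σ) *
          ∏ i ∈ Finset.univ.filter (fun i : Fin n => m ≤ (i : ℕ)), X i σ) =
      E Finset.univ (fun σ : CP n r => ∏ i, X (a i) σ) *
        E Finset.univ (fun σ : CP n r =>
          ∏ i ∈ Finset.univ.filter (fun i : Fin n => m ≤ (i : ℕ)), X i σ) := by
  have hhead : DependsOnPatternOn (fun p : Fin n => (p : ℕ) < m)
      fun σ : CP n r => ∏ i, X (a i) σ :=
    DependsOnPatternOn.prod fun i _ =>
      dependsOnPatternOn_X (Nat.lt_of_succ_lt (ha i)) fun _ => ha i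
  have htail : DependsOnPatternOn (fun p : Fin n => ¬ (p : ℕ) < m)
      fun σ : CP n r => ∏ i ∈ Finset.univ.filter (fun i : Fin n => m ≤ (i : ℕ)), X i σ :=
    DependsOnPatternOn.prod fun i hi => by
      have him : m ≤ (i : ℕ) := (Finset.mem_filter.mp hi).2
      exact dependsOnPatternOn_X (by omega) fun _ => by dsimp only; omega
  have hcard : (Fintype.card (CP n r) : ℚ) ≠ 0 := Nat.cast_ne_zero.mpr Fintype.card_ne_zero
  simp only [E, Finset.card_univ]
  rw [div_mul_div_comm, hhead.sum_mul_sum htail, mul_div_mul_left _ _ hcard]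

open ColoredPerm in
theorem descent_tail_independent (n r m j : ℕ) [NeZero r] (hmn : m ≤ n)
    (a : Fin j → Fin n) (ha : ∀ i, (a i : ℕ) + 1 < m) :
    E Finset.univ (fun σ : CP n r =>
        (∏ i, X (a i) σ) *
          ∏ i ∈ Finset.univ.filter (fun i : Fin n => m ≤ (i : ℕ)), X i σ) =
      E Finset.univ (fun σ : CP n r => ∏ i, X (a i) σ) *
        E Finset.univ (fun σ : CP n r =>
          ∏ i ∈ Finset.univ.filter (fun i : Fin n => m ≤ (i : ℕ)), X i σ) :=
  descent_tail_independent_general n r m j a ha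
end

section
/- Let Z = X_{a₁}⋯X_{a_j}·Y_{a_{j+1},c_{j+1}}⋯Y_{a_k,c_k} with a₁,…,a_j ∈ [n-1], a_{j+1},…,a_k ∈ [n], colors c_{j+1},…,c_k ∈ ℤ_r. If a_k does not lie in the essential set of X_{a₁}⋯X_{a_j}Y_{a_{j+1},c_{j+1}}⋯Y_{a_{k-1},c_{k-1}} (i.e., a_k ∉ ∪_{i≤j}{a_i, a_i+1} ∪ {a_{j+1},…,a_{k-1}}), then E_{𝔖_{n,r}}[Z] = (1/r)·E_{𝔖_{n,r}}[X_{a₁}⋯X_{a_j}Y_{a_{j+1},c_{j+1}}⋯Y_{a_{k-1},c_{k-1}}]. -/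
open scoped Classical BigOperators

/-!
The product of indicators without `Y_{b₀,c₀}` only looks at the permutation and at the colours
of the positions in its essential set, which avoids `b₀`. Recolouring position `b₀` is therefore
a bijection between the events `τ(b₀) = c` for different `c` that leaves this product unchanged,
so the `r` events carry equal shares of its sum.
-/

open Finset

section RecolourOneCoordinate

variable {β ι G M : Type*} [Fintype β] [Fintype ι] [DecidableEq ι] [Fintype G] [DecidableEq G]
  [AddCommMonoid M]

theorem sum_filter_apply_eq_of_update_invariant {F : β × (ι → G) → M} {i₀ : ι}
    (hF : ∀ x f d, F (x, Function.update f i₀ d) = F (x, f)) (c d : G) :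
    ∑ p with p.2 i₀ = c, F p = ∑ p with p.2 i₀ = d, F p := by
  refine sum_nbij' (fun p => (p.1, Function.update p.2 i₀ d))
    (fun p => (p.1, Function.update p.2 i₀ c)) ?_ ?_ ?_ ?_ ?_ <;>
    simp_all [Function.update_idem]

theorem card_nsmul_sum_filter_apply_eq_of_update_invariant {F : β × (ι → G) → M} {i₀ : ι}
    (hF : ∀ x f d, F (x, Function.update f i₀ d) = F (x, f)) (c : G) :
    Fintype.card G • ∑ p with p.2 i₀ = c, F p = ∑ p, F p := by
  rw [← sum_fiberwise univ (fun p => p.2 i₀) F, ← card_univ, ← sum_const]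
  exact sum_congr rfl fun d _ => sum_filter_apply_eq_of_update_invariant hF c d

end RecolourOneCoordinate

namespace ColoredPerm

variable {n r : ℕ}

theorem X_eq_of_colors_eq {i : Fin n} {w : Equiv.Perm (Fin n)} {f g : Fin n → ZMod r}
    (hfg : ∀ p : Fin n, (p : ℕ) = i ∨ (p : ℕ) = i + 1 → f p = g p) :
    X i (w, f) = X i (w, g) := by
  have hi : f i = g i := hfg i (Or.inl rfl)
  unfold X IsDescent
  split_ifs <;> simp_all

theorem Y_eq_of_color_eq {i : Fin n} {c : ZMod r} {w : Equiv.Perm (Fin n)}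
    {f g : Fin n → ZMod r} (hfg : f i = g i) : Y i c (w, f) = Y i c (w, g) := by
  simp only [Y, hfg]

theorem E_univ_mul_Y_eq [NeZero r] {F : CP n r → ℚ} {b₀ : Fin n}
    (hF : ∀ x f d, F (x, Function.update f b₀ d) = F (x, f)) (c₀ : ZMod r) :
    E univ (fun σ => F σ * Y b₀ c₀ σ) = (1 / (r : ℚ)) * E univ F := by
  have hr : (r : ℚ) ≠ 0 := Nat.cast_ne_zero.mpr (NeZero.ne r)
  have hsum := card_nsmul_sum_filter_apply_eq_of_update_invariant hF c₀
  rw [ZMod.card, nsmul_eq_mul] at hsum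
  simp only [E, Y, mul_ite, mul_one, mul_zero, ← sum_filter, ← hsum]
  field_simp

end ColoredPerm

open ColoredPerm in
theorem fmaj_reduction_general (n r j k : ℕ) [NeZero r] (a : Fin j → Fin n)
    (b : Fin k → Fin n) (c : Fin k → ZMod r)
    (b₀ : Fin n) (c₀ : ZMod r)
    (hess : (∀ i, (b₀ : ℕ) ≠ (a i : ℕ) ∧ (b₀ : ℕ) ≠ (a i : ℕ) + 1) ∧ ∀ i, b₀ ≠ b i) :
    E Finset.univ (fun σ : CP n r =>
        (∏ i, X (a i) σ) * (∏ i, Y (b i) (c i) σ) * Y b₀ c₀ σ) =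
      (1 / (r : ℚ)) * E Finset.univ (fun σ : CP n r =>
        (∏ i, X (a i) σ) * ∏ i, Y (b i) (c i) σ) := by
  obtain ⟨hX, hY⟩ := hess
  refine E_univ_mul_Y_eq (fun w f d => ?_) c₀
  have hupdate : ∀ p, p ≠ b₀ → Function.update f b₀ d p = f p :=
    fun p hp => Function.update_of_ne hp d f
  congr 1
  · refine prod_congr rfl fun i _ => X_eq_of_colors_eq fun p hp => hupdate p ?_
    rintro rfl
    rcases hp with hp | hp
    exacts [(hX i).1 hp, (hX i).2 hp]
  · exact prod_congr rfl fun i _ => Y_eq_of_color_eq (hupdate _ (hY i).symm)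

open ColoredPerm in
theorem fmaj_reduction (n r j k : ℕ) [NeZero r] (a : Fin j → Fin n)
    (ha : ∀ i, (a i : ℕ) + 1 < n) (b : Fin k → Fin n) (c : Fin k → ZMod r)
    (b₀ : Fin n) (c₀ : ZMod r)
    (hess : (∀ i, (b₀ : ℕ) ≠ (a i : ℕ) ∧ (b₀ : ℕ) ≠ (a i : ℕ) + 1) ∧ ∀ i, b₀ ≠ b i) :
    E Finset.univ (fun σ : CP n r =>
        (∏ i, X (a i) σ) * (∏ i, Y (b i) (c i) σ) * Y b₀ c₀ σ) =
      (1 / (r : ℚ)) * E Finset.univ (fun σ : CP n r =>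
        (∏ i, X (a i) σ) * ∏ i, Y (b i) (c i) σ) :=
  fmaj_reduction_general n r j k a b c b₀ c₀ hess
end
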